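/- In the constructed PO-ALLOCATION-ADDITIVE instance arising from a 3CNF formula φ, if φ is satisfiable, then the allocation a is not Pareto-optimal: there exists an admissible allocation a' that Pareto-dominates a. -/
import Mathlib


/-- A literal over variables `x_1, …, x_w`: a variable together with a polarity
(`true` = positive literal, `false` = negative literal). -/
abbrev Lit (w : ℕ) := Fin w × Bool

/-- The agents of the PO-ALLOCATION-ADDITIVE instance built from a 3CNF formula:
an agent `a_set(l)` for each literal `l`, an agent `a_{c_i}` for each clause, and
the two agents `a_unassigned` and `a_satisfied`. -/
inductive AgentPO (w w' : ℕ) where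
  | aset (l : Lit w)
  | ac (i : Fin w')
  | aun
  | asat
deriving DecidableEq, Fintype

/-- The resources of the PO-ALLOCATION-ADDITIVE instance: a resource `o_{c_i,l}` for
each clause `c_i` and literal `l ∈ c_i`, a resource `o_{x}` for each variable, a
resource `o_{c_i}` for each clause, and the resource `o_satisfied`. -/
inductive ResPO (w w' : ℕ) (φ : Fin w' → Finset (Lit w)) where
  | olit (x : Σ i : Fin w', {l : Lit w // l ∈ φ i})
  | ovar (x : Fin w)
  | ocl (i : Fin w')
  | osat
deriving DecidableEq, Fintype

/-- The utility coefficients of the constructed PO-ALLOCATION-ADDITIVE instance. -/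
noncomputable def coeffPO (w w' : ℕ) (φ : Fin w' → Finset (Lit w)) :
    AgentPO w w' → ResPO w w' φ → ℝ
  | .aset l, .olit ⟨_, l'⟩ => if (l' : Lit w) = l then 1 else 0
  | .aset l, .ovar x =>
      -- `a_set(l)` values `o_{x}` by the number of occurrences of `l` in the formula
      if l.1 = x then ((Finset.univ.filter fun i => l ∈ φ i).card : ℝ) else 0
  | .ac i, .olit ⟨i', _⟩ => if i' = i then 1 else 0
  | .ac i, .ocl i' => if i' = i then 1 else 0
  | .aun, .ovar _ => 1
  | .aun, .osat => (w : ℝ) + 1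
  | .asat, .ocl _ => 1
  | .asat, .osat => (w' : ℝ)
  | _, _ => 0

/-- The allocation `a` of the constructed instance: each `o_{c_i,l}` goes to `a_set(l)`,
each `o_{x}` goes to `a_unassigned`, each `o_{c_i}` goes to `a_{c_i}`, and `o_satisfied`
goes to `a_satisfied`. (An allocation maps each resource to at most one agent, which
makes it automatically admissible.) -/
def allocPO (w w' : ℕ) (φ : Fin w' → Finset (Lit w)) :
    ResPO w w' φ → Option (AgentPO w w')
  | .olit ⟨_, l⟩ => some (.aset l.1)
  | .ovar _ => some .aun
  | .ocl i => some (.ac i)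
  | .osat => some .asat

/-- The additive utility of agent `A` under an allocation: the sum of `A`'s coefficients
over the resources allocated to `A`. -/
noncomputable def utilPO (w w' : ℕ) (φ : Fin w' → Finset (Lit w))
    (al : ResPO w w' φ → Option (AgentPO w w')) (A : AgentPO w w') : ℝ :=
  ∑ o : ResPO w w' φ, if al o = some A then coeffPO w w' φ A o else 0

/-- `a'` Pareto-dominates `a`: no agent's utility decreases, some agent's utility
strictly increases. -/
def DominatesPO (w w' : ℕ) (φ : Fin w' → Finset (Lit w))
    (a' a : ResPO w w' φ → Option (AgentPO w w')) : Prop :=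
  (∀ A, utilPO w w' φ a A ≤ utilPO w w' φ a' A) ∧
  ∃ A, utilPO w w' φ a A < utilPO w w' φ a' A

/-- An allocation is Pareto-optimal if no (admissible) allocation Pareto-dominates it. -/
def ParetoOptPO (w w' : ℕ) (φ : Fin w' → Finset (Lit w))
    (a : ResPO w w' φ → Option (AgentPO w w')) : Prop :=
  ¬ ∃ a' : ResPO w w' φ → Option (AgentPO w w'), DominatesPO w w' φ a' a

/-- Satisfiability of the 3CNF formula `φ`: some truth assignment makes at least one
literal of every clause true. -/
def SatisfiablePO (w w' : ℕ) (φ : Fin w' → Finset (Lit w)) : Prop :=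
  ∃ v : Fin w → Bool, ∀ i : Fin w', ∃ l ∈ φ i, v l.1 = l.2

def eResPO (w w' : ℕ) (φ : Fin w' → Finset (Lit w)) :
    ResPO w w' φ ≃ ((Σ i : Fin w', {l : Lit w // l ∈ φ i}) ⊕ (Fin w ⊕ (Fin w' ⊕ Unit))) where
  toFun o := match o with
    | .olit x => .inl x
    | .ovar x => .inr (.inl x)
    | .ocl i => .inr (.inr (.inl i))
    | .osat => .inr (.inr (.inr ()))
  invFun y := match y with
    | .inl x => .olit x
    | .inr (.inl x) => .ovar x
    | .inr (.inr (.inl i)) => .ocl i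
    | .inr (.inr (.inr _)) => .osat
  left_inv o := by cases o <;> rfl
  right_inv y := by rcases y with x | x | i | u <;> rfl

lemma sum_resPO (w w' : ℕ) (φ : Fin w' → Finset (Lit w)) (f : ResPO w w' φ → ℝ) :
    ∑ o : ResPO w w' φ, f o =
      (∑ x : Σ i : Fin w', {l : Lit w // l ∈ φ i}, f (.olit x))
      + ((∑ x : Fin w, f (.ovar x)) + ((∑ i : Fin w', f (.ocl i)) + f .osat)) := by
  rw [← Equiv.sum_comp (eResPO w w' φ).symm f]
  simp [Fintype.sum_sum_type, eResPO]

lemma coeffPO_nonneg (w w' : ℕ) (φ : Fin w' → Finset (Lit w)) (A : AgentPO w w')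
    (o : ResPO w w' φ) : 0 ≤ coeffPO w w' φ A o := by
  cases A <;> cases o <;> simp [coeffPO] <;> first | positivity | (split <;> positivity)

lemma utilPO_eq (w w' : ℕ) (φ : Fin w' → Finset (Lit w))
    (al : ResPO w w' φ → Option (AgentPO w w')) (A : AgentPO w w') :
    utilPO w w' φ al A =
      (∑ x : Σ i : Fin w', {l : Lit w // l ∈ φ i},
          if al (.olit x) = some A then coeffPO w w' φ A (.olit x) else 0)
      + ((∑ x : Fin w, if al (.ovar x) = some A then coeffPO w w' φ A (.ovar x) else 0)
      + ((∑ i : Fin w', if al (.ocl i) = some A then coeffPO w w' φ A (.ocl i) else 0)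
      + (if al .osat = some A then coeffPO w w' φ A .osat else 0))) := by
  rw [utilPO, sum_resPO]

lemma utilPO_term_nonneg (w w' : ℕ) (φ : Fin w' → Finset (Lit w))
    (al : ResPO w w' φ → Option (AgentPO w w')) (A : AgentPO w w') (o : ResPO w w' φ) :
    0 ≤ if al o = some A then coeffPO w w' φ A o else 0 := by
  split
  · exact coeffPO_nonneg w w' φ A o
  · exact le_refl 0

/-- If the 3CNF formula `φ` (each clause has at most 3 literals) is satisfiable, then
the allocation `a` of the constructed PO-ALLOCATION-ADDITIVE instance is not
Pareto-optimal: some admissible allocation Pareto-dominates it. -/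
theorem allocPO_not_paretoOptimal_of_satisfiable (w w' : ℕ)
    (φ : Fin w' → Finset (Lit w)) (hφ : ∀ i, (φ i).card ≤ 3)
    (hsat : SatisfiablePO w w' φ) :
    ∃ a' : ResPO w w' φ → Option (AgentPO w w'),
      DominatesPO w w' φ a' (allocPO w w' φ) := by

  obtain ⟨v, hv⟩ := hsat
  choose wit hwmem hwtrue using hv
  set a' : ResPO w w' φ → Option (AgentPO w w') := fun o =>
    match o with
    | .olit ⟨i, l⟩ => if (l : Lit w) = wit i then some (.ac i) else some (.aset l.1)
    | .ovar x => some (.aset (x, v x))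
    | .ocl _ => some .asat
    | .osat => some .aun
    with ha'
  -- utilities under the original allocation
  have hold : ∀ A : AgentPO w w', utilPO w w' φ (allocPO w w' φ) A =
      match A with
      | .aset l => ((Finset.univ.filter fun i => l ∈ φ i).card : ℝ)
      | .ac _ => 1
      | .aun => (w : ℝ)
      | .asat => (w' : ℝ) := by
    intro A
    rw [utilPO_eq]
    cases A with
    | aset l =>
        have h1 : (∑ x : Σ i : Fin w', {l' : Lit w // l' ∈ φ i},
            if allocPO w w' φ (.olit x) = some (.aset l)
              then coeffPO w w' φ (.aset l) (.olit x) else 0)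
            = ((Finset.univ.filter fun i => l ∈ φ i).card : ℝ) := by
          rw [← Finset.univ_sigma_univ, Finset.sum_sigma]
          have h2 : ∀ i : Fin w', ∀ l' : {l' : Lit w // l' ∈ φ i},
              (if allocPO w w' φ (.olit ⟨i, l'⟩) = some (.aset l)
                then coeffPO w w' φ (.aset l) (.olit ⟨i, l'⟩) else 0)
              = if (l' : Lit w) = l then (1:ℝ) else 0 := by
            intro i l'
            simp only [allocPO, coeffPO, Option.some.injEq, AgentPO.aset.injEq]
            split <;> simp_all
          calc (∑ i : Fin w', ∑ l' : {l' : Lit w // l' ∈ φ i},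
                if allocPO w w' φ (.olit ⟨i, l'⟩) = some (.aset l)
                  then coeffPO w w' φ (.aset l) (.olit ⟨i, l'⟩) else 0)
              = ∑ i : Fin w', ∑ l' : {l' : Lit w // l' ∈ φ i},
                  if (l' : Lit w) = l then (1:ℝ) else 0 :=
                Finset.sum_congr rfl fun i _ => Finset.sum_congr rfl fun l' _ => h2 i l'
            _ = ∑ i : Fin w', if l ∈ φ i then (1:ℝ) else 0 := by
                refine Finset.sum_congr rfl fun i _ => ?_
                rw [Finset.univ_eq_attach,
                  Finset.sum_attach (φ i) (fun l' => if l' = l then (1:ℝ) else 0)]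
                simp [Finset.sum_ite_eq']
            _ = _ := by rw [Finset.sum_boole]
        rw [h1]
        simp [allocPO, coeffPO]
    | ac i =>
        simp [allocPO, coeffPO, Finset.sum_ite_eq']
    | aun =>
        simp [allocPO, coeffPO]
    | asat =>
        simp [allocPO, coeffPO]
  -- lower bounds under a'
  have hnn : ∀ (al : ResPO w w' φ → Option (AgentPO w w')) (A : AgentPO w w')
      (o : ResPO w w' φ), 0 ≤ (if al o = some A then coeffPO w w' φ A o else 0) :=
    utilPO_term_nonneg w w' φ
  have hnew : ∀ A : AgentPO w w',
      (match A with
      | .aset l => ((Finset.univ.filter fun i => l ∈ φ i).card : ℝ)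
      | .ac _ => 1
      | .aun => (w : ℝ) + 1
      | .asat => (w' : ℝ) : ℝ) ≤ utilPO w w' φ a' A := by
    intro A
    rw [utilPO_eq]
    cases A with
    | aun =>
        show (w : ℝ) + 1 ≤ _
        have h1 := Finset.sum_nonneg (s := Finset.univ) fun x _ => hnn a' .aun (.olit x)
        have h2 := Finset.sum_nonneg (s := Finset.univ) fun x _ => hnn a' .aun (.ovar x)
        have h3 := Finset.sum_nonneg (s := Finset.univ) fun x _ => hnn a' .aun (.ocl x)
        have h4 : (if a' .osat = some .aun then coeffPO w w' φ .aun .osat else 0)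
            = (w : ℝ) + 1 := by simp [ha', coeffPO]
        rw [h4]; linarith
    | asat =>
        show (w' : ℝ) ≤ _
        have h1 := Finset.sum_nonneg (s := Finset.univ) fun x _ => hnn a' .asat (.olit x)
        have h2 := Finset.sum_nonneg (s := Finset.univ) fun x _ => hnn a' .asat (.ovar x)
        have h4 := hnn a' .asat .osat
        have h3 : (∑ i : Fin w', if a' (.ocl i) = some .asat
            then coeffPO w w' φ .asat (.ocl i) else 0) = (w' : ℝ) := by
          simp [ha', coeffPO]
        rw [h3]; linarith
    | ac i =>
        show (1 : ℝ) ≤ _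
        have h2 := Finset.sum_nonneg (s := Finset.univ) fun x _ => hnn a' (.ac i) (.ovar x)
        have h3 := Finset.sum_nonneg (s := Finset.univ) fun x _ => hnn a' (.ac i) (.ocl x)
        have h4 := hnn a' (.ac i) .osat
        have h1 : (1:ℝ) ≤ ∑ x : Σ i : Fin w', {l' : Lit w // l' ∈ φ i},
            if a' (.olit x) = some (.ac i) then coeffPO w w' φ (.ac i) (.olit x) else 0 := by
          have hterm : (if a' (.olit ⟨i, ⟨wit i, hwmem i⟩⟩) = some (.ac i)
              then coeffPO w w' φ (.ac i) (.olit ⟨i, ⟨wit i, hwmem i⟩⟩) else 0) = 1 := by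
            simp [ha', coeffPO]
          calc (1:ℝ) = _ := hterm.symm
            _ ≤ _ := Finset.single_le_sum (fun x _ => hnn a' (.ac i) (.olit x))
                (Finset.mem_univ (⟨i, ⟨wit i, hwmem i⟩⟩ : Σ i : Fin w', {l' : Lit w // l' ∈ φ i}))
        linarith
    | aset l =>
        show ((Finset.univ.filter fun i => l ∈ φ i).card : ℝ) ≤ _
        have h3 := Finset.sum_nonneg (s := Finset.univ) fun x _ => hnn a' (.aset l) (.ocl x)
        have h4 := hnn a' (.aset l) .osat
        by_cases hvl : v l.1 = l.2
        · have h1 := Finset.sum_nonneg (s := Finset.univ) fun x _ => hnn a' (.aset l) (.olit x)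
          have h2 : ((Finset.univ.filter fun i => l ∈ φ i).card : ℝ)
              ≤ ∑ x : Fin w, if a' (.ovar x) = some (.aset l)
                  then coeffPO w w' φ (.aset l) (.ovar x) else 0 := by
            have hl : (l.1, v l.1) = l := by rw [hvl]
            have hterm : (if a' (.ovar l.1) = some (.aset l)
                then coeffPO w w' φ (.aset l) (.ovar l.1) else 0)
                = ((Finset.univ.filter fun i => l ∈ φ i).card : ℝ) := by
              simp [ha', coeffPO, hl]
            calc _ = _ := hterm.symm
              _ ≤ _ := Finset.single_le_sum (fun x _ => hnn a' (.aset l) (.ovar x))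
                  (Finset.mem_univ l.1)
          linarith
        · have h2 := Finset.sum_nonneg (s := Finset.univ) fun x _ => hnn a' (.aset l) (.ovar x)
          have h1 : ((Finset.univ.filter fun i => l ∈ φ i).card : ℝ)
              ≤ ∑ x : Σ i : Fin w', {l' : Lit w // l' ∈ φ i},
                  if a' (.olit x) = some (.aset l)
                    then coeffPO w w' φ (.aset l) (.olit x) else 0 := by
            have key : (∑ x : Σ i : Fin w', {l' : Lit w // l' ∈ φ i},
                if (x.2 : Lit w) = l then (1:ℝ) else 0)
                = ((Finset.univ.filter fun i => l ∈ φ i).card : ℝ) := by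
              rw [← Finset.univ_sigma_univ, Finset.sum_sigma]
              calc (∑ i : Fin w', ∑ l' : {l' : Lit w // l' ∈ φ i},
                    if (l' : Lit w) = l then (1:ℝ) else 0)
                  = ∑ i : Fin w', if l ∈ φ i then (1:ℝ) else 0 := by
                    refine Finset.sum_congr rfl fun i _ => ?_
                    rw [Finset.univ_eq_attach,
                      Finset.sum_attach (φ i) (fun l' => if l' = l then (1:ℝ) else 0)]
                    simp [Finset.sum_ite_eq']
                _ = _ := by rw [Finset.sum_boole]
            rw [← key]
            refine Finset.sum_le_sum fun x _ => ?_
            obtain ⟨i, l'⟩ := x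
            by_cases hx : (l' : Lit w) = l
            · have hne : l ≠ wit i := by
                intro h
                apply hvl
                rw [h]
                exact hwtrue i
              simp [ha', coeffPO, hx, hne]
            · simp only [hx, if_false]
              exact hnn a' (.aset l) (.olit ⟨i, l'⟩)
          linarith
  refine ⟨a', fun A => ?_, .aun, ?_⟩
  · rw [hold A]
    cases A with
    | aset l => exact hnew (.aset l)
    | ac i => exact hnew (.ac i)
    | aun => exact le_trans (le_of_lt (lt_add_one (w:ℝ))) (hnew .aun)
    | asat => exact hnew .asat
  · calc utilPO w w' φ (allocPO w w' φ) .aun = (w : ℝ) := hold .aun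
      _ < (w : ℝ) + 1 := lt_add_one _
      _ ≤ utilPO w w' φ a' .aun := hnew .aun
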